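/- Let p be a prime, k ≥ 1 an integer, θ ∈ ℚ_p with |θ|_p ≥ 1, and 0 < δ < 1. Let λ be a null sequence in ℚ_p with |λ(i)|_p ≤ δ for all i. Then the map 𝓕_θ on B_δ given by (𝓕_θ(x))_i = λ(i)·(F_i(x,θ))^k has a unique fixed point in B_δ. -/

import Mathlib

open Filter Topology BigOperators

noncomputable def Fmap {p : ℕ} [Fact p.Prime] (θ : ℚ_[p]) (x : ℕ → ℚ_[p]) (i : ℕ) : ℚ_[p] :=
  ((θ - 1) * x i + (∑' j, x j) + 1) / ((∑' j, x j) + θ)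

/-!
On `B_δ` the ultrametric inequality pins the denominator: `‖∑ x + θ‖ = ‖θ‖`, because
`‖∑ x‖ ≤ δ < 1 ≤ ‖θ‖`. Hence `‖F_i(x, θ)‖ ≤ 1`, and `F_i` is `1`-Lipschitz for the sup norm in
both `x_i` and `∑ x`. Since `a ↦ a ^ k` is `1`-Lipschitz on the unit ball, the factor `λ(i)` turns
this into a `δ`-contraction of `B_δ`, which is the closed ball of radius `δ` in the Banach space
`C₀(ℕ, ℚ_p) = c₀(ℚ_p)`, and the Banach fixed point theorem applies.
-/

open Set Function IsUltrametricDist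

open scoped NNReal ZeroAtInfty

section Ultrametric

lemma IsUltrametricDist.norm_pow_sub_pow_le {R : Type*} [NormedRing R] [NormOneClass R]
    [IsUltrametricDist R] {a b : R} (ha : ‖a‖ ≤ 1) (hb : ‖b‖ ≤ 1) (n : ℕ) :
    ‖a ^ n - b ^ n‖ ≤ ‖a - b‖ := by
  induction n with
  | zero => simp
  | succ n ih =>
    have hbn : ‖b ^ n‖ ≤ 1 := (_root_.norm_pow_le b n).trans (pow_le_one₀ (norm_nonneg b) hb)
    calc ‖a ^ (n + 1) - b ^ (n + 1)‖ = ‖a * (a ^ n - b ^ n) + (a - b) * b ^ n‖ := by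
          rw [pow_succ' a, pow_succ' b, mul_sub, sub_mul]; abel_nf
      _ ≤ max (‖a‖ * ‖a ^ n - b ^ n‖) (‖a - b‖ * ‖b ^ n‖) :=
          (norm_add_le_max _ _).trans (max_le_max (norm_mul_le _ _) (norm_mul_le _ _))
      _ ≤ ‖a - b‖ :=
          max_le ((mul_le_of_le_one_left (norm_nonneg _) ha).trans ih)
            (mul_le_of_le_one_right (norm_nonneg _) hbn)

lemma IsUltrametricDist.norm_sub_le_max {S : Type*} [SeminormedAddGroup S] [IsUltrametricDist S]
    (x y : S) : ‖x - y‖ ≤ max ‖x‖ ‖y‖ := by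
  simpa [sub_eq_add_neg] using norm_add_le_max x (-y)

lemma IsUltrametricDist.norm_add_eq_right_of_lt {S : Type*} [SeminormedAddGroup S]
    [IsUltrametricDist S] {s θ : S} (h : ‖s‖ < ‖θ‖) : ‖s + θ‖ = ‖θ‖ := by
  rw [norm_add_eq_max_of_norm_ne_norm h.ne, max_eq_right h.le]

variable {K : Type*} [NormedField K] [IsUltrametricDist K] {θ : K}

lemma IsUltrametricDist.norm_sub_one_le_of_one_le (hθ : 1 ≤ ‖θ‖) : ‖θ - 1‖ ≤ ‖θ‖ :=
  (norm_sub_le_max θ 1).trans (by simpa using hθ)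

lemma norm_frac_le_one (hθ : 1 ≤ ‖θ‖) {a s : K} (ha : ‖a‖ ≤ 1) (hs : ‖s‖ < 1) :
    ‖((θ - 1) * a + s + 1) / (s + θ)‖ ≤ 1 := by
  rw [norm_div, norm_add_eq_right_of_lt (hs.trans_le hθ), div_le_one (one_pos.trans_le hθ)]
  have hprod : ‖(θ - 1) * a‖ ≤ ‖θ‖ := by
    rw [norm_mul]
    exact (mul_le_of_le_one_right (norm_nonneg _) ha).trans (norm_sub_one_le_of_one_le hθ)
  refine (norm_add_le_max _ _).trans (max_le ((norm_add_le_max _ _).trans ?_) ?_)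
  · exact max_le hprod (hs.le.trans hθ)
  · rwa [norm_one]

lemma norm_frac_sub_frac_le (hθ : 1 ≤ ‖θ‖) {a b s t : K} (hb : ‖b‖ ≤ 1) (hs : ‖s‖ < 1)
    (ht : ‖t‖ < 1) :
    ‖((θ - 1) * a + s + 1) / (s + θ) - ((θ - 1) * b + t + 1) / (t + θ)‖ ≤
      max ‖a - b‖ ‖s - t‖ := by
  have hθ0 : 0 < ‖θ‖ := one_pos.trans_le hθ
  have hsθ := norm_add_eq_right_of_lt (hs.trans_le hθ)
  have htθ := norm_add_eq_right_of_lt (ht.trans_le hθ)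
  have hsθ0 : s + θ ≠ 0 := norm_ne_zero_iff.mp (hsθ ▸ hθ0.ne')
  have htθ0 : t + θ ≠ 0 := norm_ne_zero_iff.mp (htθ ▸ hθ0.ne')
  have hsub : ((θ - 1) * a + s + 1) / (s + θ) - ((θ - 1) * b + t + 1) / (t + θ) =
      (θ - 1) * ((a - b) * (t + θ) + (s - t) * (1 - b)) / ((s + θ) * (t + θ)) := by
    field_simp
    ring
  have h1b : ‖1 - b‖ ≤ ‖θ‖ := (norm_sub_le_max 1 b).trans (by simpa using ⟨hθ, hb.trans hθ⟩)
  have hsum : ‖(a - b) * (t + θ) + (s - t) * (1 - b)‖ ≤ max ‖a - b‖ ‖s - t‖ * ‖θ‖ := by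
    rw [max_mul_of_nonneg _ _ hθ0.le]
    refine (norm_add_le_max _ _).trans (max_le_max ?_ ?_) <;> rw [norm_mul]
    · rw [htθ]
    · exact mul_le_mul_of_nonneg_left h1b (norm_nonneg _)
  rw [hsub, norm_div, norm_mul, norm_mul, hsθ, htθ, div_le_iff₀ (by positivity)]
  calc ‖θ - 1‖ * ‖(a - b) * (t + θ) + (s - t) * (1 - b)‖
      ≤ ‖θ‖ * (max ‖a - b‖ ‖s - t‖ * ‖θ‖) :=
        mul_le_mul (norm_sub_one_le_of_one_le hθ) hsum (norm_nonneg _) hθ0.le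
    _ = max ‖a - b‖ ‖s - t‖ * (‖θ‖ * ‖θ‖) := by ring

end Ultrametric

section C0

variable {E : Type*} [NormedAddCommGroup E]

def c0ClosedBall (δ : ℝ) : Set (ℕ → E) := {x | Tendsto x atTop (𝓝 0) ∧ ∀ i, ‖x i‖ ≤ δ}

namespace ZeroAtInftyContinuousMap

def ofTendstoNat (x : ℕ → E) (hx : Tendsto x atTop (𝓝 0)) : C₀(ℕ, E) :=
  ⟨⟨x, continuous_of_discreteTopology⟩, cocompact_eq_atTop (α := ℕ) ▸ hx⟩

lemma tendsto_atTop_nat (f : C₀(ℕ, E)) : Tendsto f atTop (𝓝 0) :=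
  cocompact_eq_atTop (α := ℕ) ▸ zero_at_infty f

lemma dist_le_iff_nat {f g : C₀(ℕ, E)} {d : ℝ} (hd : 0 ≤ d) :
    dist f g ≤ d ↔ ∀ i, ‖f i - g i‖ ≤ d := by
  rw [← dist_toBCF_eq_dist, BoundedContinuousFunction.dist_le hd]
  simp only [dist_eq_norm]
  rfl

lemma mem_closedBall_zero_iff_nat {δ : ℝ} (hδ : 0 ≤ δ) (f : C₀(ℕ, E)) :
    f ∈ Metric.closedBall 0 δ ↔ ⇑f ∈ c0ClosedBall δ := by
  simp only [Metric.mem_closedBall, dist_le_iff_nat hδ]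
  exact ⟨fun h => ⟨tendsto_atTop_nat f, by simpa using h⟩, fun h => by simpa using h.2⟩

end ZeroAtInftyContinuousMap

open ZeroAtInftyContinuousMap

theorem existsUnique_fixedPoint_of_c0ClosedBall [CompleteSpace E] {δ : ℝ} (hδ : 0 ≤ δ)
    {K : ℝ≥0} (hK : K < 1) {f : (ℕ → E) → ℕ → E}
    (hf : MapsTo f (c0ClosedBall δ) (c0ClosedBall δ))
    (hcontr : ∀ x ∈ c0ClosedBall δ, ∀ y ∈ c0ClosedBall δ, ∀ d : ℝ,
      (∀ j, ‖x j - y j‖ ≤ d) → ∀ i, ‖f x i - f y i‖ ≤ K * d) :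
    ∃! x, x ∈ c0ClosedBall δ ∧ ∀ i, x i = f x i := by
  set B := Metric.closedBall (0 : C₀(ℕ, E)) δ
  have hB := mem_closedBall_zero_iff_nat (E := E) hδ
  let T : B → B := fun g =>
    ⟨ofTendstoNat (f g) (hf ((hB g).1 g.2)).1, (hB _).2 (hf ((hB g).1 g.2))⟩
  have hT : ContractingWith K T := by
    refine ⟨hK, LipschitzWith.of_dist_le_mul fun g h => ?_⟩
    rw [Subtype.dist_eq, dist_le_iff_nat (by positivity)]
    exact hcontr _ ((hB g).1 g.2) _ ((hB h).1 h.2) _ ((dist_le_iff_nat dist_nonneg).1 le_rfl)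
  have : CompleteSpace B := Metric.isClosed_closedBall.completeSpace_coe
  have : Nonempty B := ⟨⟨0, Metric.mem_closedBall_self hδ⟩⟩
  have isFixedPt_iff (g : B) : IsFixedPt T g ↔ ∀ i, g.1 i = f g i := by
    rw [IsFixedPt, Subtype.ext_iff, ZeroAtInftyContinuousMap.ext_iff]
    exact forall_congr' fun i => eq_comm
  refine ⟨_, ⟨(hB _).1 (hT.fixedPoint T).2, (isFixedPt_iff _).1 hT.fixedPoint_isFixedPt⟩, ?_⟩
  rintro x ⟨hx, hfx⟩
  let g : B := ⟨ofTendstoNat x hx.1, (hB _).2 hx⟩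
  exact congrArg (fun g : B => ⇑g.1) (hT.fixedPoint_unique ((isFixedPt_iff g).2 hfx))

variable [IsUltrametricDist E] {δ : ℝ} {x : ℕ → E}

lemma summable_of_mem_c0ClosedBall [CompleteSpace E] (hx : x ∈ c0ClosedBall δ) : Summable x :=
  NonarchimedeanAddGroup.summable_of_tendsto_cofinite_zero (Nat.cofinite_eq_atTop ▸ hx.1)

lemma norm_tsum_lt_one_of_mem_c0ClosedBall (hδ : δ < 1) (hx : x ∈ c0ClosedBall δ) :
    ‖∑' j, x j‖ < 1 :=
  (norm_tsum_le_of_forall_le hx.2).trans_lt hδ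

end C0

section Padic

variable {p : ℕ} [Fact p.Prime] {θ : ℚ_[p]} {δ : ℝ}

lemma norm_Fmap_le_one (hθ : 1 ≤ ‖θ‖) (hδ : δ < 1) {x : ℕ → ℚ_[p]} (hx : x ∈ c0ClosedBall δ)
    (i : ℕ) : ‖Fmap θ x i‖ ≤ 1 :=
  norm_frac_le_one hθ ((hx.2 i).trans hδ.le) (norm_tsum_lt_one_of_mem_c0ClosedBall hδ hx)

lemma norm_Fmap_sub_Fmap_le (hθ : 1 ≤ ‖θ‖) (hδ : δ < 1) {x y : ℕ → ℚ_[p]}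
    (hx : x ∈ c0ClosedBall δ) (hy : y ∈ c0ClosedBall δ) {d : ℝ} (hd : ∀ j, ‖x j - y j‖ ≤ d)
    (i : ℕ) : ‖Fmap θ x i - Fmap θ y i‖ ≤ d := by
  have hsum : ‖∑' j, x j - ∑' j, y j‖ ≤ d := by
    rw [← (summable_of_mem_c0ClosedBall hx).tsum_sub (summable_of_mem_c0ClosedBall hy)]
    exact norm_tsum_le_of_forall_le hd
  exact (norm_frac_sub_frac_le hθ ((hy.2 i).trans hδ.le) (norm_tsum_lt_one_of_mem_c0ClosedBall hδ hx)
    (norm_tsum_lt_one_of_mem_c0ClosedBall hδ hy)).trans (max_le (hd i) hsum)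

variable (θ) in
lemma mapsTo_mul_Fmap_pow_c0ClosedBall (hθ : 1 ≤ ‖θ‖) (hδ : δ < 1) {l : ℕ → ℚ_[p]}
    (hl0 : Tendsto l atTop (𝓝 0)) (hl : ∀ i, ‖l i‖ ≤ δ) (k : ℕ) :
    MapsTo (fun x i => l i * Fmap θ x i ^ k) (c0ClosedBall δ) (c0ClosedBall δ) := by
  intro x hx
  have hle (i : ℕ) : ‖l i * Fmap θ x i ^ k‖ ≤ ‖l i‖ := by
    rw [norm_mul, norm_pow]
    exact mul_le_of_le_one_right (norm_nonneg _)
      (pow_le_one₀ (norm_nonneg _) (norm_Fmap_le_one hθ hδ hx i))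
  exact ⟨squeeze_zero_norm hle (tendsto_zero_iff_norm_tendsto_zero.1 hl0),
    fun i => (hle i).trans (hl i)⟩

lemma norm_mul_Fmap_pow_sub_le (hθ : 1 ≤ ‖θ‖) (hδ : δ < 1) {l : ℕ → ℚ_[p]}
    (hl : ∀ i, ‖l i‖ ≤ δ) (k : ℕ) {x y : ℕ → ℚ_[p]} (hx : x ∈ c0ClosedBall δ)
    (hy : y ∈ c0ClosedBall δ) {d : ℝ} (hd : ∀ j, ‖x j - y j‖ ≤ d) (i : ℕ) :
    ‖l i * Fmap θ x i ^ k - l i * Fmap θ y i ^ k‖ ≤ δ * d := by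
  rw [← mul_sub, norm_mul]
  refine mul_le_mul (hl i) ?_ (norm_nonneg _) ((norm_nonneg _).trans (hl i))
  exact (norm_pow_sub_pow_le (norm_Fmap_le_one hθ hδ hx i) (norm_Fmap_le_one hθ hδ hy i) k).trans
    (norm_Fmap_sub_Fmap_le hθ hδ hx hy hd i)

end Padic

theorem stmt6_general (p k : ℕ) [Fact p.Prime] (θ : ℚ_[p]) (hθ : 1 ≤ ‖θ‖)
    (δ : ℝ) (hδ1 : δ < 1) (l : ℕ → ℚ_[p])
    (hl0 : Tendsto l atTop (nhds 0)) (hl : ∀ i, ‖l i‖ ≤ δ) :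
    ∃! x : ℕ → ℚ_[p],
      (Tendsto x atTop (nhds 0) ∧ ∀ i, ‖x i‖ ≤ δ) ∧
        ∀ i, x i = l i * (Fmap θ x i) ^ k := by
  have hδ0 : 0 ≤ δ := (norm_nonneg _).trans (hl 0)
  exact existsUnique_fixedPoint_of_c0ClosedBall hδ0 (K := ⟨δ, hδ0⟩) hδ1
    (mapsTo_mul_Fmap_pow_c0ClosedBall θ hθ hδ1 hl0 hl k)
    (fun x hx y hy _ hd => norm_mul_Fmap_pow_sub_le hθ hδ1 hl k hx hy hd)

theorem stmt6 (p k : ℕ) [Fact p.Prime] (hk : 1 ≤ k) (θ : ℚ_[p]) (hθ : 1 ≤ ‖θ‖)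
    (δ : ℝ) (hδ0 : 0 < δ) (hδ1 : δ < 1) (l : ℕ → ℚ_[p])
    (hl0 : Tendsto l atTop (nhds 0)) (hl : ∀ i, ‖l i‖ ≤ δ) :
    ∃! x : ℕ → ℚ_[p],
      (Tendsto x atTop (nhds 0) ∧ ∀ i, ‖x i‖ ≤ δ) ∧
        ∀ i, x i = l i * (Fmap θ x i) ^ k :=
  stmt6_general p k θ hθ δ hδ1 l hl0 hl
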